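/- If a cycle Δ is a subgraph of a finite graph Γ, then the edge set E(Δ) is a disjoint union of C1-sets of Γ. -/

import Mathlib

/-! Basic theory of finite multigraphs (loops and multiple edges allowed),
following Caporaso–Viviani, "Torelli theorem for graphs and tropical curves". -/

noncomputable section

open scoped Classical

/-- A finite multigraph: finite types of vertices and edges, each edge having two
(possibly equal) endpoints `fst e` and `snd e`. -/
structure Multigraph where
  V : Type
  E : Type
  [fintV : Fintype V]
  [fintE : Fintype E]
  fst : E → V
  snd : E → V

namespace Multigraph

attribute [instance] Multigraph.fintV Multigraph.fintE

variable (G : Multigraph)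

/-- Two vertices are adjacent if some edge joins them. -/
def Adj (v w : G.V) : Prop :=
  ∃ e : G.E, (G.fst e = v ∧ G.snd e = w) ∨ (G.fst e = w ∧ G.snd e = v)

/-- Reachability by walks. -/
def Reachable (v w : G.V) : Prop := Relation.ReflTransGen G.Adj v w

def Preconnected : Prop := ∀ v w : G.V, G.Reachable v w

def Connected : Prop := Nonempty G.V ∧ G.Preconnected

/-- The number of connected components. -/
def numComponents : ℕ := Nat.card (Quot G.Adj)

/-- The first Betti number `b₁ = c - #V + #E`. -/
def b1 : ℤ := (G.numComponents : ℤ) + (Nat.card G.E : ℤ) - (Nat.card G.V : ℤ)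

/-- The spanning subgraph `Γ∖S` obtained by deleting the edges in `S`. -/
def deleteEdges (S : Set G.E) : Multigraph :=
  { V := G.V
    E := {e : G.E // e ∉ S}
    fst := fun e => G.fst e.1
    snd := fun e => G.snd e.1
    fintV := G.fintV
    fintE := Fintype.ofFinite _ }

/-- The subgraph spanned by a set of edges: its vertices are the incident vertices. -/
def restrict (S : Set G.E) : Multigraph :=
  { V := {v : G.V // ∃ e ∈ S, G.fst e = v ∨ G.snd e = v}
    E := ↥S
    fst := fun e => ⟨G.fst e.1, e.1, e.2, Or.inl rfl⟩
    snd := fun e => ⟨G.snd e.1, e.1, e.2, Or.inr rfl⟩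
    fintV := Fintype.ofFinite _
    fintE := Fintype.ofFinite _ }

/-- The graph `Γ(S)` obtained by contracting all the edges *not* in `S`; its vertices
are the connected components of `Γ∖S` and its edges are the elements of `S`. -/
def contractCompl (S : Set G.E) : Multigraph :=
  { V := Quot (G.deleteEdges S).Adj
    E := ↥S
    fst := fun e => Quot.mk _ (G.fst e.1)
    snd := fun e => Quot.mk _ (G.snd e.1)
    fintV := Fintype.ofFinite _
    fintE := Fintype.ofFinite _ }

/-- An edge is separating if its endpoints are no longer joined after deleting it. -/
def IsSeparating (e : G.E) : Prop :=
  ¬ (G.deleteEdges {e}).Reachable (G.fst e) (G.snd e)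

/-- The set of separating edges. -/
def sepEdges : Set G.E := {e | G.IsSeparating e}

/-- The graph with its isolated vertices removed. -/
def core : Multigraph := G.restrict Set.univ

/-- A cycle: a connected graph, free from separating edges, with `b₁ = 1`. -/
def IsCycleGraph : Prop := G.Connected ∧ G.sepEdges = ∅ ∧ G.b1 = 1

/-- `S` is (the edge set of) a cycle subgraph of `G`. -/
def IsCycleSet (S : Set G.E) : Prop := (G.restrict S).IsCycleGraph

/-- `S` is a C1-set of `G`: writing `Γ̃ = Γ∖E(Γ)_sep`, the set `S` consists of
non-separating edges, the contraction `Γ̃(S)` (with isolated vertices removed) is a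
cycle, and `Γ̃∖S` has no separating edges.  (Equivalently, `S` is a C1-set of the
connected component of `Γ̃` containing it.) -/
def IsC1 (S : Set G.E) : Prop :=
  (∀ e ∈ S, ¬ G.IsSeparating e) ∧
  (((G.deleteEdges G.sepEdges).contractCompl {e | e.1 ∈ S}).core).IsCycleGraph ∧
  ((G.deleteEdges G.sepEdges).deleteEdges {e | e.1 ∈ S}).sepEdges = ∅

/-! ### Orientations -/

/-- An orientation is encoded by a map `E → Bool`; `src` is the source of an edge. -/
def src (o : G.E → Bool) (e : G.E) : G.V := if o e then G.fst e else G.snd e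

/-- The target of an edge under the orientation `o`. -/
def tgt (o : G.E → Bool) (e : G.E) : G.V := if o e then G.snd e else G.fst e

/-- An orientation is totally cyclic if there is no nonempty set of vertices `W`,
whose complement meets the component of a vertex of `W`, such that all edges between
`W` and its complement go in the same direction. -/
def IsTotallyCyclic (o : G.E → Bool) : Prop :=
  ∀ W : Set G.V, W.Nonempty →
    (∃ v ∈ W, ∃ w, w ∉ W ∧ G.Reachable v w) →
    (∃ e, G.src o e ∈ W ∧ G.tgt o e ∉ W) ∧ (∃ e, G.tgt o e ∈ W ∧ G.src o e ∉ W)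

/-- Directed reachability with respect to an orientation. -/
def DReachable (o : G.E → Bool) (v w : G.V) : Prop :=
  Relation.ReflTransGen (fun a b => ∃ e, G.src o e = a ∧ G.tgt o e = b) v w

/-! ### Homology -/

/-- Incidence of an oriented edge on a vertex: `(tgt e = v) - (src e = v)`. -/
def inc (o : G.E → Bool) (e : G.E) (v : G.V) : ℤ :=
  (if G.tgt o e = v then 1 else 0) - (if G.src o e = v then 1 else 0)

/-- `H₁(Γ,ℤ)`: the kernel of the boundary map `C₁(Γ,ℤ) → C₀(Γ,ℤ)`. -/
def cycleSpace (o : G.E → Bool) : Submodule ℤ (G.E → ℤ) where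
  carrier := {f | ∀ v, ∑ e, f e * G.inc o e v = 0}
  zero_mem' := by intro v; simp
  add_mem' := by
    intro f g hf hg v
    simp only [Set.mem_setOf_eq] at hf hg
    simp [add_mul, Finset.sum_add_distrib, hf v, hg v]
  smul_mem' := by
    intro c f hf v
    simp only [Set.mem_setOf_eq] at hf
    simp [smul_eq_mul, mul_assoc, ← Finset.mul_sum, hf v]

/-- Real incidence. -/
def incR (o : G.E → Bool) (e : G.E) (v : G.V) : ℝ := (G.inc o e v : ℝ)

/-- `H₁(Γ,ℝ)`: the kernel of the boundary map `C₁(Γ,ℝ) → C₀(Γ,ℝ)`. -/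
def cycleSpaceR (o : G.E → Bool) : Submodule ℝ (G.E → ℝ) where
  carrier := {f | ∀ v, ∑ e, f e * G.incR o e v = 0}
  zero_mem' := by intro v; simp
  add_mem' := by
    intro f g hf hg v
    simp only [Set.mem_setOf_eq] at hf hg
    simp [add_mul, Finset.sum_add_distrib, hf v, hg v]
  smul_mem' := by
    intro c f hf v
    simp only [Set.mem_setOf_eq] at hf
    simp [smul_eq_mul, mul_assoc, ← Finset.mul_sum, hf v]

/-- The indicator chain of a set of edges. -/
def indicator (S : Set G.E) : G.E → ℤ := fun e => if e ∈ S then 1 else 0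

/-- `S` is a cyclically oriented cycle of `G` for the orientation `o`: `S` is a cycle
and its indicator chain is a homology class (each vertex of the cycle has one ingoing
and one outgoing edge of `S`). -/
def IsCyclicallyOriented (o : G.E → Bool) (S : Set G.E) : Prop :=
  G.IsCycleSet S ∧ G.indicator S ∈ G.cycleSpace o

/-- The coordinate functional `e*` restricted to `H₁(Γ,ℝ)`. -/
def edgeFunR (o : G.E → Bool) (e : G.E) : Module.Dual ℝ ↥(G.cycleSpaceR o) :=
  (LinearMap.proj e).comp (G.cycleSpaceR o).subtype

/-! ### Connectivity and regularity -/

/-- The degree (valence) of a vertex; loops count twice. -/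
def degree (v : G.V) : ℕ :=
  Nat.card {e : G.E // G.fst e = v} + Nat.card {e : G.E // G.snd e = v}

/-- A graph is 3-regular if every vertex has valence 3. -/
def ThreeRegular : Prop := ∀ v : G.V, G.degree v = 3

/-- Deletion of a set of vertices, together with all incident edges. -/
def deleteVerts (W : Set G.V) : Multigraph :=
  { V := {v : G.V // v ∉ W}
    E := {e : G.E // G.fst e ∉ W ∧ G.snd e ∉ W}
    fst := fun e => ⟨G.fst e.1, e.2.1⟩
    snd := fun e => ⟨G.snd e.1, e.2.2⟩
    fintV := Fintype.ofFinite _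
    fintE := Fintype.ofFinite _ }

/-- 3-edge connectivity: removing any 2 edges leaves the graph connected. -/
def EdgeConnected3 : Prop :=
  Nonempty G.V ∧ ∀ F : Set G.E, Nat.card F ≤ 2 → (G.deleteEdges F).Preconnected

/-- 3-connectivity: removing any 2 vertices (with incident edges) leaves the graph
connected. -/
def Connected3 : Prop :=
  Nonempty G.V ∧ ∀ W : Set G.V, Nat.card W ≤ 2 → (G.deleteVerts W).Preconnected

/-- Isomorphism of multigraphs. -/
def IsIsoTo (G H : Multigraph) : Prop :=
  ∃ (fV : G.V ≃ H.V) (fE : G.E ≃ H.E), ∀ e : G.E,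
    (H.fst (fE e) = fV (G.fst e) ∧ H.snd (fE e) = fV (G.snd e)) ∨
    (H.fst (fE e) = fV (G.snd e) ∧ H.snd (fE e) = fV (G.fst e))

/-- A bijection of edge sets is cyclic if it induces a bijection between cycles. -/
def IsCyclicBijection (G G' : Multigraph) (ε : G.E ≃ G'.E) : Prop :=
  ∀ S : Set G.E, G.IsCycleSet S ↔ G'.IsCycleSet (⇑ε '' S)

/-- Two orientations are equal as orientations (encodings may differ on loops). -/
def OrientEq (o₁ o₂ : G.E → Bool) : Prop :=
  ∀ e : G.E, G.src o₁ e = G.src o₂ e ∧ G.tgt o₁ e = G.tgt o₂ e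

/-- `o` is an orientation of `G` extending the orientation `φ` of `Γ∖T`. -/
def ExtendsOrient (T : Set G.E) (φ : (G.deleteEdges T).E → Bool) (o : G.E → Bool) : Prop :=
  ∀ e : (G.deleteEdges T).E,
    G.src o e.1 = (G.deleteEdges T).src φ e ∧ G.tgt o e.1 = (G.deleteEdges T).tgt φ e

end Multigraph

namespace Multigraph

variable {G : Multigraph}

/-- Step relation through edges in `A`. -/
def Radj (G : Multigraph) (A : Set G.E) (u v : G.V) : Prop :=
  ∃ e ∈ A, (G.fst e = u ∧ G.snd e = v) ∨ (G.fst e = v ∧ G.snd e = u)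

/-- Reachability through edges in `A`. -/
def ReachIn (G : Multigraph) (A : Set G.E) : G.V → G.V → Prop :=
  Relation.ReflTransGen (G.Radj A)

lemma Radj.symm {A : Set G.E} {u v} (h : G.Radj A u v) : G.Radj A v u := by
  obtain ⟨e, he, h | h⟩ := h
  exacts [⟨e, he, Or.inr h⟩, ⟨e, he, Or.inl h⟩]

lemma Radj.reachIn {A : Set G.E} {u v} (h : G.Radj A u v) : G.ReachIn A u v :=
  Relation.ReflTransGen.single h

@[refl] lemma ReachIn.refl {A : Set G.E} {u} : G.ReachIn A u u := Relation.ReflTransGen.refl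

lemma ReachIn.symm {A : Set G.E} {u v} (h : G.ReachIn A u v) : G.ReachIn A v u := by
  induction h with
  | refl => exact .refl
  | tail _ hstep ih => exact Relation.ReflTransGen.trans (Relation.ReflTransGen.single hstep.symm) ih

lemma ReachIn.trans {A : Set G.E} {u v w} (h : G.ReachIn A u v) (h' : G.ReachIn A v w) :
    G.ReachIn A u w := Relation.ReflTransGen.trans h h'

lemma Radj.mono {A B : Set G.E} (hAB : A ⊆ B) {u v} (h : G.Radj A u v) : G.Radj B u v := by
  obtain ⟨e, he, h⟩ := h; exact ⟨e, hAB he, h⟩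

lemma ReachIn.mono {A B : Set G.E} (hAB : A ⊆ B) {u v} (h : G.ReachIn A u v) :
    G.ReachIn B u v := Relation.ReflTransGen.mono (fun _ _ h => h.mono hAB) _ _ h

lemma adj_iff_radj {u v : G.V} : G.Adj u v ↔ G.Radj Set.univ u v := by
  constructor
  · rintro ⟨e, h⟩; exact ⟨e, trivial, h⟩
  · rintro ⟨e, -, h⟩; exact ⟨e, h⟩

lemma reachable_iff_reachIn {u v : G.V} : G.Reachable u v ↔ G.ReachIn Set.univ u v :=
  ⟨fun h => Relation.ReflTransGen.mono (fun _ _ h => adj_iff_radj.1 h) _ _ h,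
   fun h => Relation.ReflTransGen.mono (fun _ _ h => adj_iff_radj.2 h) _ _ h⟩

/-- Replacement: reroute every use of `e` through a detour in `B`. -/
lemma ReachIn.replace {A B : Set G.E} {e : G.E} {u v}
    (h : G.ReachIn A u v) (hdet : G.ReachIn B (G.fst e) (G.snd e)) :
    G.ReachIn ((A \ {e}) ∪ B) u v := by
  induction h with
  | refl => exact .refl
  | tail _ hstep ih =>
      rename_i c d _
      refine ih.trans ?_
      obtain ⟨g, hg, hge⟩ := hstep
      by_cases hgeq : g = e
      · subst hgeq
        rcases hge with ⟨h1, h2⟩ | ⟨h1, h2⟩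
        · rw [← h1, ← h2]; exact hdet.mono Set.subset_union_right
        · rw [← h1, ← h2]; exact (hdet.mono Set.subset_union_right).symm
      · exact Radj.reachIn ⟨g, Or.inl ⟨hg, hgeq⟩, hge⟩

end Multigraph
namespace Multigraph

variable {G : Multigraph}

lemma radj_deleteEdges_iff {X : Set G.E} {A : Set (G.deleteEdges X).E} {u v : G.V} :
    (G.deleteEdges X).Radj A u v ↔
      G.Radj {g | ∃ hg : g ∉ X, (⟨g, hg⟩ : (G.deleteEdges X).E) ∈ A} u v := by
  constructor
  · rintro ⟨⟨e, he⟩, heA, h⟩; exact ⟨e, ⟨he, heA⟩, h⟩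
  · rintro ⟨g, ⟨hg, hgA⟩, h⟩; exact ⟨⟨g, hg⟩, hgA, h⟩

lemma reachIn_deleteEdges_iff {X : Set G.E} {A : Set (G.deleteEdges X).E} {u v : G.V} :
    (G.deleteEdges X).ReachIn A u v ↔
      G.ReachIn {g | ∃ hg : g ∉ X, (⟨g, hg⟩ : (G.deleteEdges X).E) ∈ A} u v :=
  ⟨fun h => Relation.ReflTransGen.mono (fun _ _ h => radj_deleteEdges_iff.1 h) _ _ h,
   fun h => Relation.ReflTransGen.mono (fun _ _ h => radj_deleteEdges_iff.2 h) _ _ h⟩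

lemma deleteEdges_reachable_iff {X : Set G.E} {u v : G.V} :
    (G.deleteEdges X).Reachable u v ↔ G.ReachIn Xᶜ u v := by
  refine reachable_iff_reachIn.trans ?_
  rw [reachIn_deleteEdges_iff]
  have : {g | ∃ _ : g ∉ X, (⟨g, ‹_›⟩ : (G.deleteEdges X).E) ∈ (Set.univ : Set (G.deleteEdges X).E)}
      = Xᶜ := by ext g; simp [Set.mem_compl_iff]; exact ⟨fun ⟨h, _⟩ => h, fun h => ⟨h, trivial⟩⟩
  rw [this]

lemma isSeparating_iff {e : G.E} :
    G.IsSeparating e ↔ ¬ G.ReachIn {e}ᶜ (G.fst e) (G.snd e) := by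
  unfold IsSeparating
  rw [deleteEdges_reachable_iff]

lemma not_isSeparating_iff {e : G.E} :
    ¬ G.IsSeparating e ↔ G.ReachIn {e}ᶜ (G.fst e) (G.snd e) := by
  rw [isSeparating_iff, not_not]

/-- The incidence predicate defining the vertices of `G.restrict S`. -/
def Incid (G : Multigraph) (S : Set G.E) (v : G.V) : Prop :=
  ∃ e ∈ S, G.fst e = v ∨ G.snd e = v

lemma restrict_reachable_of_reachIn {S : Set G.E} :
    ∀ {a b : G.V}, G.ReachIn S a b → ∀ (ha : G.Incid S a) (hb : G.Incid S b),
      (G.restrict S).Reachable ⟨a, ha⟩ ⟨b, hb⟩ := by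
  intro a b h
  induction h using Relation.ReflTransGen.head_induction_on with
  | refl => intro ha hb; exact Relation.ReflTransGen.refl
  | head hstep _ ih =>
      rename_i a c _
      intro ha hb
      obtain ⟨e, heS, hor⟩ := hstep
      have hc : G.Incid S c := ⟨e, heS, by tauto⟩
      refine Relation.ReflTransGen.head ⟨⟨e, heS⟩, ?_⟩ (ih hc hb)
      rcases hor with ⟨h1, h2⟩ | ⟨h1, h2⟩ <;>
        first
          | exact Or.inl ⟨Subtype.ext h1, Subtype.ext h2⟩
          | exact Or.inr ⟨Subtype.ext h1, Subtype.ext h2⟩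

lemma restrict_reachable_iff {S : Set G.E} {x y : (G.restrict S).V} :
    (G.restrict S).Reachable x y ↔ G.ReachIn S x.1 y.1 := by
  constructor
  · intro h
    refine Relation.ReflTransGen.lift Subtype.val (fun a b hab => ?_) _ _ h
    obtain ⟨⟨e, he⟩, hor⟩ := hab
    refine ⟨e, he, ?_⟩
    rcases hor with ⟨h1, h2⟩ | ⟨h1, h2⟩
    · exact Or.inl ⟨congrArg Subtype.val h1, congrArg Subtype.val h2⟩
    · exact Or.inr ⟨congrArg Subtype.val h1, congrArg Subtype.val h2⟩
  · intro h
    obtain ⟨x, hx⟩ := x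
    obtain ⟨y, hy⟩ := y
    exact restrict_reachable_of_reachIn h hx hy

/-- Reachability in `restrict S` minus one edge. -/
lemma restrict_deleteEdges_reachable_of_reachIn {S : Set G.E} {x₀ : (G.restrict S).E} :
    ∀ {a b : G.V}, G.ReachIn (S \ {x₀.1}) a b →
      ∀ (ha : G.Incid S a) (hb : G.Incid S b),
      ((G.restrict S).deleteEdges {x₀}).Reachable ⟨a, ha⟩ ⟨b, hb⟩ := by
  intro a b h
  induction h using Relation.ReflTransGen.head_induction_on with
  | refl => intro ha hb; exact Relation.ReflTransGen.refl
  | head hstep _ ih =>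
      rename_i a c _
      intro ha hb
      obtain ⟨e, ⟨heS, hex⟩, hor⟩ := hstep
      have hc : G.Incid S c := ⟨e, heS, by tauto⟩
      refine Relation.ReflTransGen.head
        ⟨⟨⟨e, heS⟩, fun hmem => hex (by simpa using congrArg Subtype.val hmem)⟩, ?_⟩ (ih hc hb)
      rcases hor with ⟨h1, h2⟩ | ⟨h1, h2⟩ <;>
        first
          | exact Or.inl ⟨Subtype.ext h1, Subtype.ext h2⟩
          | exact Or.inr ⟨Subtype.ext h1, Subtype.ext h2⟩

lemma reachIn_restrict_val {S : Set G.E} {A : Set (G.restrict S).E} {x y : (G.restrict S).V}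
    (h : (G.restrict S).ReachIn A x y) :
    G.ReachIn {g | ∃ hg : g ∈ S, (⟨g, hg⟩ : ↥S) ∈ A} x.1 y.1 := by
  refine Relation.ReflTransGen.lift Subtype.val (fun a b hab => ?_) _ _ h
  obtain ⟨⟨e, he⟩, heA, hor⟩ := hab
  refine ⟨e, ⟨he, heA⟩, ?_⟩
  rcases hor with ⟨h1, h2⟩ | ⟨h1, h2⟩
  · exact Or.inl ⟨congrArg Subtype.val h1, congrArg Subtype.val h2⟩
  · exact Or.inr ⟨congrArg Subtype.val h1, congrArg Subtype.val h2⟩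

/-- Unwind a cycle set at one of its edges. -/
lemma IsCycleSet.reachIn_of_mem {S : Set G.E} (h : G.IsCycleSet S) {f : G.E} (hf : f ∈ S) :
    G.ReachIn (S \ {f}) (G.fst f) (G.snd f) := by
  obtain ⟨-, hsep, -⟩ := h
  have hx : ¬ (G.restrict S).IsSeparating ⟨f, hf⟩ := by
    intro hcon
    have : (⟨f, hf⟩ : ↥S) ∈ (G.restrict S).sepEdges := hcon
    rw [hsep] at this
    exact this
  replace hx := not_isSeparating_iff.mp hx
  have h2 := reachIn_restrict_val hx
  have hset : {g | ∃ hg : g ∈ S, (⟨g, hg⟩ : ↥S) ∈ ({(⟨f, hf⟩ : ↥S)}ᶜ : Set ↥S)} = S \ {f} := by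
    ext g
    simp only [Set.mem_setOf_eq, Set.mem_compl_iff, Set.mem_singleton_iff, Set.mem_diff]
    constructor
    · rintro ⟨hg, hne⟩
      exact ⟨hg, fun hgf => hne (Subtype.ext hgf)⟩
    · rintro ⟨hg, hne⟩
      exact ⟨hg, fun hgf => hne (by simpa using congrArg Subtype.val hgf)⟩
  exact h2.mono hset.subset

lemma IsCycleSet.reachIn_of_incid {S : Set G.E} (h : G.IsCycleSet S) {u v : G.V}
    (hu : G.Incid S u) (hv : G.Incid S v) : G.ReachIn S u v := by
  obtain ⟨⟨-, hpre⟩, -, -⟩ := h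
  have := hpre ⟨u, hu⟩ ⟨v, hv⟩
  exact restrict_reachable_iff.mp this

lemma IsCycleSet.not_isSeparating {S : Set G.E} (h : G.IsCycleSet S) {f : G.E} (hf : f ∈ S) :
    ¬ G.IsSeparating f := by
  rw [not_isSeparating_iff]
  exact (h.reachIn_of_mem hf).mono (by intro g hg; exact fun hgf => hg.2 hgf)

end Multigraph
namespace Multigraph

variable {G : Multigraph}

/-- Joins predicate. -/
def Joins (G : Multigraph) (e : G.E) (u v : G.V) : Prop :=
  (G.fst e = u ∧ G.snd e = v) ∨ (G.fst e = v ∧ G.snd e = u)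

lemma Joins.symm {e : G.E} {u v} (h : G.Joins e u v) : G.Joins e v u := Or.symm h

lemma Joins.radj {e : G.E} {u v} {A : Set G.E} (he : e ∈ A) (h : G.Joins e u v) :
    G.Radj A u v := ⟨e, he, h⟩

inductive Walk (G : Multigraph) : G.V → G.V → Type
  | nil (v : G.V) : Walk G v v
  | cons {u v w : G.V} (e : G.E) (he : G.Joins e u v) (p : Walk G v w) : Walk G u w

namespace Walk

def support : ∀ {u v : G.V}, Walk G u v → List G.V
  | _, _, nil v => [v]
  | u, _, cons _ _ p => u :: p.support

def edges : ∀ {u v : G.V}, Walk G u v → List G.E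
  | _, _, nil _ => []
  | _, _, cons e _ p => e :: p.edges

lemma start_mem_support : ∀ {u v : G.V} (p : Walk G u v), u ∈ p.support
  | _, _, nil v => List.mem_singleton_self v
  | _, _, cons _ _ _ => List.mem_cons_self

lemma end_mem_support : ∀ {u v : G.V} (p : Walk G u v), v ∈ p.support
  | _, _, nil v => List.mem_singleton_self v
  | _, _, cons _ _ p => List.mem_cons_of_mem _ p.end_mem_support

lemma length_support : ∀ {u v : G.V} (p : Walk G u v),
    p.support.length = p.edges.length + 1
  | _, _, nil v => rfl
  | _, _, cons _ _ p => by simp [support, edges, p.length_support]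

lemma mem_support_of_mem_edges : ∀ {u v : G.V} (p : Walk G u v) {e : G.E},
    e ∈ p.edges → G.fst e ∈ p.support ∧ G.snd e ∈ p.support := by
  intro u v p
  induction p with
  | nil v => intro e h; simp [edges] at h
  | cons f hf p ih =>
      intro e h
      rw [edges, List.mem_cons] at h
      rcases h with h | h
      · subst h
        rw [support, List.mem_cons, List.mem_cons]
        rcases hf with ⟨h1, h2⟩ | ⟨h1, h2⟩
        · exact ⟨Or.inl h1, Or.inr (by rw [h2]; exact p.start_mem_support)⟩
        · exact ⟨Or.inr (by rw [h1]; exact p.start_mem_support), Or.inl h2⟩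
      · obtain ⟨ha, hb⟩ := ih h
        rw [support]
        exact ⟨List.mem_cons_of_mem _ ha, List.mem_cons_of_mem _ hb⟩

lemma edges_nodup_of_support_nodup : ∀ {u v : G.V} (p : Walk G u v),
    p.support.Nodup → p.edges.Nodup := by
  intro u v p
  induction p with
  | nil v => intro _; simp [edges]
  | cons f hf p ih =>
      intro h
      rw [support, List.nodup_cons] at h
      rw [edges, List.nodup_cons]
      refine ⟨fun hmem => ?_, ih h.2⟩
      have hends := p.mem_support_of_mem_edges hmem
      apply h.1
      rcases hf with ⟨h1, -⟩ | ⟨-, h1⟩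
      · rw [← h1]; exact hends.1
      · rw [← h1]; exact hends.2

lemma eq_nil_of_support_nodup : ∀ {u : G.V} (p : Walk G u u),
    p.support.Nodup → p.edges = [] := by
  intro u p
  match p with
  | nil v => intro _; rfl
  | cons f hf q =>
      intro h
      rw [support, List.nodup_cons] at h
      exact absurd q.end_mem_support h.1

def dropUntil : ∀ {u v : G.V} (p : Walk G u v) (w : G.V), w ∈ p.support → Walk G w v
  | _, _, nil v, w, h => (List.mem_singleton.mp h) ▸ nil v
  | u, v, cons e he p, w, h =>
      if hw : w = u then hw ▸ cons e he p
      else p.dropUntil w (by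
        rcases List.mem_cons.mp h with h' | h'
        · exact absurd h' hw
        · exact h')

lemma support_dropUntil_sublist : ∀ {u v : G.V} (p : Walk G u v) (w : G.V)
    (h : w ∈ p.support), ((p.dropUntil w h).support).Sublist p.support := by
  intro u v p
  induction p with
  | nil v =>
      intro w h
      have hw : w = v := List.mem_singleton.mp h
      subst hw
      exact List.Sublist.refl _
  | cons e he p ih =>
      intro w h
      rw [dropUntil]
      split
      · rename_i hw
        subst hw
        exact List.Sublist.refl _
      · exact List.Sublist.trans (ih w _) (List.sublist_cons_self _ _)

lemma edges_dropUntil_subset : ∀ {u v : G.V} (p : Walk G u v) (w : G.V)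
    (h : w ∈ p.support), ∀ e ∈ (p.dropUntil w h).edges, e ∈ p.edges := by
  intro u v p
  induction p with
  | nil v =>
      intro w h e
      have hw : w = v := List.mem_singleton.mp h
      subst hw
      intro he; exact he
  | cons f hf p ih =>
      intro w h e he
      rw [dropUntil] at he
      split at he
      · rename_i hw; subst hw; exact he
      · exact List.mem_cons_of_mem _ (ih w _ e he)

def bypass : ∀ {u v : G.V}, Walk G u v → Walk G u v
  | _, _, nil v => nil v
  | u, _, cons e he p =>
      if hu : u ∈ p.bypass.support then p.bypass.dropUntil u hu
      else cons e he p.bypass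

lemma edges_bypass_subset : ∀ {u v : G.V} (p : Walk G u v), ∀ e ∈ p.bypass.edges, e ∈ p.edges := by
  intro u v p
  induction p with
  | nil v => intro e he; exact he
  | cons f hf p ih =>
      intro e he
      rw [bypass] at he
      split at he
      · exact List.mem_cons_of_mem _ (ih e (p.bypass.edges_dropUntil_subset _ _ e he))
      · rw [edges, List.mem_cons] at he
        rcases he with he | he
        · exact he ▸ List.mem_cons_self
        · exact List.mem_cons_of_mem _ (ih e he)

lemma support_bypass_nodup : ∀ {u v : G.V} (p : Walk G u v), p.bypass.support.Nodup := by
  intro u v p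
  induction p with
  | nil v => simp [bypass, support]
  | cons f hf p ih =>
      rw [bypass]
      split
      · exact (p.bypass.support_dropUntil_sublist _ _).nodup ih
      · rename_i hu
        rw [support, List.nodup_cons]
        exact ⟨hu, ih⟩

lemma reachIn {A : Set G.E} : ∀ {u v : G.V} (p : Walk G u v),
    (∀ e ∈ p.edges, e ∈ A) → G.ReachIn A u v := by
  intro u v p
  induction p with
  | nil v => intro _; exact ReachIn.refl
  | cons f hf p ih =>
      intro h
      refine Relation.ReflTransGen.head ⟨f, h f (List.mem_cons_self), hf⟩
        (ih fun e he => h e (List.mem_cons_of_mem _ he))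

end Walk

lemma exists_walk_of_reachIn {A : Set G.E} {u v : G.V} (h : G.ReachIn A u v) :
    ∃ p : Walk G u v, ∀ e ∈ p.edges, e ∈ A := by
  induction h using Relation.ReflTransGen.head_induction_on with
  | refl => exact ⟨Walk.nil v, by intro e he; simp [Walk.edges] at he⟩
  | head hstep _ ih =>
      obtain ⟨p, hp⟩ := ih
      obtain ⟨e, heA, hor⟩ := hstep
      refine ⟨Walk.cons e hor p, ?_⟩
      intro g hg
      simp only [Walk.edges, List.mem_cons] at hg
      rcases hg with hg | hg
      · exact hg ▸ heA
      · exact hp g hg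

end Multigraph
namespace Multigraph

variable {G : Multigraph}

lemma quot_mk_eq_of_reachable {u v : G.V} (h : G.Reachable u v) :
    Quot.mk G.Adj u = Quot.mk G.Adj v := by
  induction h with
  | refl => rfl
  | tail _ hstep ih => exact ih.trans (Quot.sound hstep)

lemma numComponents_eq_one (h : G.Connected) : G.numComponents = 1 := by
  obtain ⟨hne, hpre⟩ := h
  rw [numComponents, Nat.card_eq_one_iff_unique]
  constructor
  · constructor
    intro a b
    induction a using Quot.ind with | _ a =>
    induction b using Quot.ind with | _ b =>
    exact quot_mk_eq_of_reachable (hpre a b)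
  · obtain ⟨v⟩ := hne
    exact ⟨Quot.mk _ v⟩

lemma Walk.rotate : ∀ {u v : G.V} (p : Walk G u v), p.edges.Nodup →
    ∀ {B : Set G.E}, G.ReachIn B v u → ∀ {g}, g ∈ p.edges → g ∉ B →
    G.ReachIn (({e | e ∈ p.edges} ∪ B) \ {g}) (G.fst g) (G.snd g) := by
  intro u v p
  induction p with
  | nil v => intro _ B _ g hg; simp [Walk.edges] at hg
  | cons e he p ih =>
      rename_i u₁ v₁ w₁
      intro hnd B hret g hg hgB
      rw [Walk.edges, List.nodup_cons] at hnd
      rw [Walk.edges, List.mem_cons] at hg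
      rcases hg with hg | hg
      · subst hg
        have h1 : G.ReachIn ({e' | e' ∈ p.edges} ∪ B) v₁ u₁ :=
          (p.reachIn fun e' he' => Set.mem_union_left _ he').trans
            (hret.mono Set.subset_union_right)
        have hsub : ({e' | e' ∈ p.edges} ∪ B : Set G.E) ⊆
            ({e' | e' ∈ (Walk.cons g he p).edges} ∪ B) \ {g} := by
          rintro x (hx | hx)
          · exact ⟨Or.inl (List.mem_cons_of_mem _ hx), fun hxg => hnd.1 (hxg ▸ hx)⟩
          · exact ⟨Or.inr hx, fun hxg => hgB (hxg ▸ hx)⟩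
        have h2 := h1.mono hsub
        rcases he with ⟨hf1, hf2⟩ | ⟨hf1, hf2⟩
        · subst hf1; subst hf2; exact h2.symm
        · subst hf1; subst hf2; exact h2
      · have hstep : G.ReachIn (B ∪ {e}) u₁ v₁ :=
          Radj.reachIn ⟨e, Or.inr rfl, he⟩
        have hret' : G.ReachIn (B ∪ {e}) w₁ v₁ :=
          (hret.mono Set.subset_union_left).trans hstep
        have hgB' : g ∉ B ∪ {e} := by
          rintro (hx | hx)
          · exact hgB hx
          · simp only [Set.mem_singleton_iff] at hx
            exact hnd.1 (hx ▸ hg)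
        have := ih hnd.2 hret' hg hgB'
        refine this.mono ?_
        rintro x ⟨hx | hx, hxg⟩
        · exact ⟨Or.inl (List.mem_cons_of_mem _ hx), hxg⟩
        · rcases hx with hx | hx
          · exact ⟨Or.inr hx, hxg⟩
          · simp only [Set.mem_singleton_iff] at hx
            exact ⟨Or.inl (hx ▸ List.mem_cons_self), hxg⟩

lemma Walk.mem_support_cases : ∀ {u v : G.V} (p : Walk G u v) {x : G.V}, x ∈ p.support →
    (∃ e ∈ p.edges, G.fst e = x ∨ G.snd e = x) ∨ (x = u ∧ x = v) := by
  intro u v p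
  induction p with
  | nil v => intro x hx; right; have := List.mem_singleton.mp hx; exact ⟨this, this⟩
  | cons e he p ih =>
      intro x hx
      rw [support, List.mem_cons] at hx
      rcases hx with hx | hx
      · subst hx
        left
        exact ⟨e, List.mem_cons_self, by rcases he with ⟨h1, -⟩ | ⟨-, h1⟩ <;> tauto⟩
      · rcases ih hx with ⟨e', he', h⟩ | ⟨h1, h2⟩
        · exact Or.inl ⟨e', List.mem_cons_of_mem _ he', h⟩
        · subst h1
          left
          exact ⟨e, List.mem_cons_self, by rcases he with ⟨-, h2'⟩ | ⟨h2', -⟩ <;> tauto⟩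

/-- A circuit (nodup closed walk) spans a cycle set. -/
theorem exists_cycleSet {f : G.E} {A : Set G.E} (hfA : f ∉ A)
    (h : G.ReachIn A (G.fst f) (G.snd f)) :
    ∃ T : Set G.E, G.IsCycleSet T ∧ f ∈ T ∧ T ⊆ insert f A := by
  obtain ⟨p, hp⟩ := exists_walk_of_reachIn h
  set q := p.bypass with hq
  have hqA : ∀ e ∈ q.edges, e ∈ A := fun e he => hp e (p.edges_bypass_subset e he)
  have hnds : q.support.Nodup := p.support_bypass_nodup
  have hnde : q.edges.Nodup := q.edges_nodup_of_support_nodup hnds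
  have hfq : f ∉ q.edges := fun hmem => hfA (hqA f hmem)
  set T : Set G.E := insert f {e | e ∈ q.edges} with hT
  have hfT : f ∈ T := Set.mem_insert _ _
  have hqT : ∀ e ∈ q.edges, e ∈ T := fun e he => Set.mem_insert_of_mem _ he
  -- the incident vertices are exactly the support
  have hset : {v : G.V | G.Incid T v} = {v : G.V | v ∈ q.support} := by
    ext v
    simp only [Set.mem_setOf_eq]
    constructor
    · rintro ⟨e, heT, hor⟩
      rcases heT with rfl | he
      · rcases hor with h1 | h1
        · exact h1 ▸ q.start_mem_support
        · exact h1 ▸ q.end_mem_support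
      · have := q.mem_support_of_mem_edges he
        rcases hor with h1 | h1
        · exact h1 ▸ this.1
        · exact h1 ▸ this.2
    · intro hv
      rcases q.mem_support_cases hv with ⟨e, he, hor⟩ | ⟨h1, -⟩
      · exact ⟨e, hqT e he, hor⟩
      · exact ⟨f, hfT, Or.inl h1.symm⟩
  -- reach the end of the walk from any incident vertex
  have hreach : ∀ v : G.V, G.Incid T v → G.ReachIn T v (G.snd f) := by
    intro v hv
    have hv' : v ∈ q.support := by rw [Set.ext_iff] at hset; exact (hset v).1 hv
    exact (q.dropUntil v hv').reachIn fun e he =>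
      hqT e (q.edges_dropUntil_subset v hv' e he)
  have hconn : (G.restrict T).Connected := by
    constructor
    · exact ⟨⟨G.fst f, f, hfT, Or.inl rfl⟩⟩
    · intro x y
      rw [restrict_reachable_iff]
      exact (hreach x.1 x.2).trans (hreach y.1 y.2).symm
  have hsep : (G.restrict T).sepEdges = ∅ := by
    rw [Set.eq_empty_iff_forall_notMem]
    intro x hx
    have hx' : (G.restrict T).IsSeparating x := hx
    apply hx'
    have hkey : G.ReachIn (T \ {x.1}) (G.fst x.1) (G.snd x.1) := by
      rcases Set.mem_insert_iff.mp x.2 with hxf | hxe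
      · rw [hxf]
        refine q.reachIn fun e he => ⟨hqT e he, fun hef => ?_⟩
        simp only [Set.mem_singleton_iff] at hef
        exact hfq (hef ▸ he)
      · have hret : G.ReachIn {f} (G.snd f) (G.fst f) :=
          Radj.reachIn ⟨f, rfl, Or.inr ⟨rfl, rfl⟩⟩
        have hgB : x.1 ∉ ({f} : Set G.E) := by
          intro hmem
          simp only [Set.mem_singleton_iff] at hmem
          exact hfq (by rwa [hmem] at hxe)
        have := q.rotate hnde hret hxe hgB
        refine this.mono ?_
        rintro g ⟨hg | hg, hgx⟩
        · exact ⟨hqT g hg, hgx⟩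
        · simp only [Set.mem_singleton_iff] at hg
          exact ⟨hg ▸ hfT, hgx⟩
    exact restrict_deleteEdges_reachable_of_reachIn hkey _ _
  refine ⟨T, ⟨hconn, hsep, ?_⟩, hfT, ?_⟩
  · -- b1 = 1
    have hc : (G.restrict T).numComponents = 1 := numComponents_eq_one hconn
    have hE : Nat.card (G.restrict T).E = q.edges.length + 1 := by
      have h1 : T = ↑(insert f q.edges.toFinset) := by
        ext e
        simp [hT, List.mem_toFinset]
      have : Nat.card (G.restrict T).E = T.ncard := Nat.card_coe_set_eq T
      rw [this, h1, Set.ncard_coe_finset,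
        Finset.card_insert_of_notMem (by simpa using hfq), List.toFinset_card_of_nodup hnde]
    have hV : Nat.card (G.restrict T).V = q.edges.length + 1 := by
      have h1 : {v : G.V | G.Incid T v} = ↑q.support.toFinset := by
        rw [hset]; ext v; simp [List.mem_toFinset]
      have : Nat.card (G.restrict T).V = ({v : G.V | G.Incid T v}).ncard :=
        Nat.card_coe_set_eq _
      rw [this, h1, Set.ncard_coe_finset, List.toFinset_card_of_nodup hnds, q.length_support]
    rw [b1, hc, hE, hV]
    omega
  · intro e he
    rcases Set.mem_insert_iff.mp he with rfl | he
    · exact Set.mem_insert _ _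
    · exact Set.mem_insert_of_mem _ (hqA e he)

end Multigraph
namespace Multigraph

variable {G : Multigraph}

lemma connected_deleteEdges_of_not_separating (h : G.Connected) {e : G.E}
    (he : ¬ G.IsSeparating e) : (G.deleteEdges {e}).Connected := by
  rw [not_isSeparating_iff] at he
  refine ⟨h.1, fun u v => ?_⟩
  refine deleteEdges_reachable_iff.mpr ?_
  have h1 : G.ReachIn Set.univ u v := reachable_iff_reachIn.mp (h.2 u v)
  have := h1.replace he
  refine this.mono ?_
  rintro g (⟨-, hg⟩ | hg) <;> exact hg

inductive ReachN (G : Multigraph) : ℕ → G.V → G.V → Prop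
  | refl (v : G.V) : ReachN G 0 v v
  | head {u w v : G.V} {n : ℕ} (h : G.Adj u w) (hr : ReachN G n w v) : ReachN G (n + 1) u v

lemma ReachN.tail : ∀ {n : ℕ} {u c : G.V}, G.ReachN n u c → ∀ {d}, G.Adj c d →
    G.ReachN (n + 1) u d := by
  intro n u c h
  induction h with
  | refl v => intro d hadj; exact ReachN.head hadj (ReachN.refl d)
  | head hadj _ ih => intro d h2; exact ReachN.head hadj (ih h2)

lemma exists_reachN_of_reachable {u v : G.V} (h : G.Reachable u v) : ∃ n, G.ReachN n u v := by
  induction h with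
  | refl => exact ⟨0, ReachN.refl u⟩
  | tail _ hstep ih => obtain ⟨n, hn⟩ := ih; exact ⟨n + 1, hn.tail hstep⟩

lemma ReachN.eq_of_zero {u v : G.V} (h : G.ReachN 0 u v) : u = v := by
  cases h; rfl

/-- A connected graph has at most `#E + 1` vertices. -/
lemma card_V_le_card_E_add_one (h : G.Connected) : Nat.card G.V ≤ Nat.card G.E + 1 := by
  obtain ⟨⟨r⟩, hpre⟩ := h
  have hex : ∀ v : G.V, ∃ n, G.ReachN n v r := fun v => exists_reachN_of_reachable (hpre v r)
  set d : G.V → ℕ := fun v => Nat.find (hex v) with hd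
  have hP : ∀ v : {v : G.V // v ≠ r}, ∃ e, ∃ w, G.Joins e v.1 w ∧ d w < d v.1 := by
    rintro ⟨v, hv⟩
    have hspec : G.ReachN (d v) v r := Nat.find_spec (hex v)
    obtain ⟨m, hm⟩ : ∃ m, d v = m + 1 := by
      refine ⟨d v - 1, ?_⟩
      have : d v ≠ 0 := fun h0 => hv (((h0 ▸ hspec : G.ReachN 0 v r)).eq_of_zero)
      omega
    rw [hm] at hspec
    cases hspec with
    | head hadj hr =>
        rename_i w
        obtain ⟨e, hj⟩ := hadj
        refine ⟨e, w, hj, ?_⟩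
        have h1 : d w ≤ m := Nat.find_min' (hex w) hr
        show d w < d v
        omega
  set F : {v : G.V // v ≠ r} → G.E := fun v => Classical.choose (hP v) with hF
  have hFinj : Function.Injective F := by
    rintro v₁ v₂ hEq
    have hs₁ : ∃ w, G.Joins (F v₁) v₁.1 w ∧ d w < d v₁.1 := Classical.choose_spec (hP v₁)
    have hs₂ : ∃ w, G.Joins (F v₂) v₂.1 w ∧ d w < d v₂.1 := Classical.choose_spec (hP v₂)
    obtain ⟨w₁, hj₁, hlt₁⟩ := hs₁
    obtain ⟨w₂, hj₂, hlt₂⟩ := hs₂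
    rw [hEq] at hj₁
    by_contra hne
    have hvne : v₁.1 ≠ v₂.1 := fun hc => hne (Subtype.ext hc)
    rcases hj₁ with ⟨ha1, ha2⟩ | ⟨ha1, ha2⟩ <;> rcases hj₂ with ⟨hb1, hb2⟩ | ⟨hb1, hb2⟩
    · exact hvne (ha1.symm.trans hb1)
    · have h₁ : w₂ = v₁.1 := hb1.symm.trans ha1
      have h₂ : w₁ = v₂.1 := ha2.symm.trans hb2
      rw [h₁] at hlt₂; rw [h₂] at hlt₁; omega
    · have h₁ : w₁ = v₂.1 := ha1.symm.trans hb1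
      have h₂ : w₂ = v₁.1 := hb2.symm.trans ha2
      rw [h₁] at hlt₁; rw [h₂] at hlt₂; omega
    · exact hvne (ha2.symm.trans hb2)
  have hcard : Nat.card {v : G.V // v ≠ r} ≤ Nat.card G.E :=
    Nat.card_le_card_of_injective F hFinj
  have h2 : Nat.card {v : G.V // v ≠ r} = Nat.card G.V - 1 := by
    have e1 : Nat.card {v : G.V // v ≠ r} = ({r}ᶜ : Set G.V).ncard := by
      rw [← Nat.card_coe_set_eq]
      rfl
    rw [e1, Set.compl_eq_univ_diff,
      Set.ncard_diff (Set.subset_univ _) (Set.toFinite _), Set.ncard_univ, Set.ncard_singleton]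
  have h3 : 1 ≤ Nat.card G.V := by
    have : Nonempty G.V := ⟨r⟩
    rw [Nat.card_eq_fintype_card]
    exact Fintype.card_pos
  omega

lemma Walk.final_edge_unique : ∀ {u v : G.V} (p : Walk G u v), p.support.Nodup →
    ∀ {e e'}, e ∈ p.edges → (G.fst e = v ∨ G.snd e = v) →
      e' ∈ p.edges → (G.fst e' = v ∨ G.snd e' = v) → e = e' := by
  intro u v p
  induction p with
  | nil v => intro _ e e' he; simp [Walk.edges] at he
  | cons g hg p ih =>
      rename_i u₁ v₁ w₁
      intro hnd e e' he hev he' hev'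
      rw [Walk.support, List.nodup_cons] at hnd
      have huv : u₁ ≠ w₁ := by
        intro hc
        exact hnd.1 (hc ▸ p.end_mem_support)
      have hmain : ∀ x, x ∈ (Walk.cons g hg p).edges → (G.fst x = w₁ ∨ G.snd x = w₁) →
          (x = g → v₁ = w₁) := by
        intro x hx hxv hxg
        subst hxg
        rcases hg with ⟨h1, h2⟩ | ⟨h1, h2⟩ <;> rcases hxv with h3 | h3
        · exact absurd (h1.symm.trans h3) huv
        · exact h2.symm.trans h3
        · exact h1.symm.trans h3
        · exact absurd (h2.symm.trans h3) huv
      rw [Walk.edges, List.mem_cons] at he he'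
      rcases he with rfl | he <;> rcases he' with rfl | he'
      · rfl
      · -- e = g, e' in p
        have hv1 : v₁ = w₁ := hmain e (List.mem_cons_self) hev rfl
        subst hv1
        rw [p.eq_nil_of_support_nodup hnd.2] at he'
        simp at he'
      · have hv1 : v₁ = w₁ := hmain e' (List.mem_cons_self) hev' rfl
        subst hv1
        rw [p.eq_nil_of_support_nodup hnd.2] at he
        simp at he
      · exact ih hnd.2 he hev he' hev'

/-- A connected graph all of whose edges are separating has at least `#E + 1` vertices. -/
lemma card_E_add_one_le_card_V (h : G.Connected)
    (hall : ∀ e : G.E, G.IsSeparating e) : Nat.card G.E + 1 ≤ Nat.card G.V := by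
  obtain ⟨⟨r⟩, hpre⟩ := h
  have claimA : ∀ e : G.E, G.ReachIn {e}ᶜ r (G.fst e) ∨ G.ReachIn {e}ᶜ r (G.snd e) := by
    intro e
    have haux : ∀ x : G.V, G.ReachIn Set.univ r x →
        G.ReachIn {e}ᶜ r x ∨ (G.ReachIn {e}ᶜ r (G.fst e) ∨ G.ReachIn {e}ᶜ r (G.snd e)) := by
      intro x hx
      induction hx with
      | refl => exact Or.inl ReachIn.refl
      | tail _ hstep ih =>
          rcases ih with ih | ih
          · obtain ⟨g, -, hj⟩ := hstep
            by_cases hge : g = e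
            · subst hge
              rcases hj with ⟨h1, -⟩ | ⟨-, h2⟩
              · exact Or.inr (Or.inl (h1 ▸ ih))
              · exact Or.inr (Or.inr (h2 ▸ ih))
            · exact Or.inl (ih.trans (Radj.reachIn ⟨g, hge, hj⟩))
          · exact Or.inr ih
    rcases haux (G.fst e) (reachable_iff_reachIn.mp (hpre r (G.fst e))) with h1 | h1
    · exact Or.inl h1
    · exact h1
  have claimB : ∀ e : G.E, ¬ (G.ReachIn {e}ᶜ r (G.fst e) ∧ G.ReachIn {e}ᶜ r (G.snd e)) := by
    rintro e ⟨h1, h2⟩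
    exact isSeparating_iff.mp (hall e) (h1.symm.trans h2)
  set m : G.E → G.V := fun e => if G.ReachIn {e}ᶜ r (G.fst e) then G.snd e else G.fst e with hm
  have hmprop : ∀ e, ¬ G.ReachIn {e}ᶜ r (m e) ∧ (G.fst e = m e ∨ G.snd e = m e) := by
    intro e
    by_cases hc : G.ReachIn {e}ᶜ r (G.fst e)
    · have hme : m e = G.snd e := if_pos hc
      rw [hme]
      exact ⟨fun h2 => claimB e ⟨hc, h2⟩, Or.inr rfl⟩
    · have hme : m e = G.fst e := if_neg hc
      rw [hme]
      exact ⟨hc, Or.inl rfl⟩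
  have hmr : ∀ e, m e ≠ r := by
    intro e hc
    exact (hmprop e).1 (hc ▸ ReachIn.refl)
  have hminj : Function.Injective m := by
    intro e₁ e₂ hEq
    set v := m e₂ with hv
    obtain ⟨p, hp⟩ := exists_walk_of_reachIn
      (A := Set.univ) (reachable_iff_reachIn.mp (hpre r v))
    set q := p.bypass with hq
    have hnds : q.support.Nodup := p.support_bypass_nodup
    have hmem : ∀ e : G.E, m e = v → e ∈ q.edges := by
      intro e he
      by_contra hne
      exact (he ▸ (hmprop e).1) (q.reachIn fun g hg => fun hge => hne (by
        simp only [Set.mem_singleton_iff] at hge; exact hge ▸ hg))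
    have hinc : ∀ e : G.E, m e = v → (G.fst e = v ∨ G.snd e = v) := by
      intro e he
      rcases (hmprop e).2 with h1 | h1
      · exact Or.inl (h1.trans he)
      · exact Or.inr (h1.trans he)
    exact q.final_edge_unique hnds (hmem e₁ hEq) (hinc e₁ hEq) (hmem e₂ rfl) (hinc e₂ rfl)
  have hcard : Nat.card G.E ≤ Nat.card {v : G.V // v ≠ r} := by
    have : Function.Injective (fun e => (⟨m e, hmr e⟩ : {v : G.V // v ≠ r})) :=
      fun e₁ e₂ hEq => hminj (congrArg Subtype.val hEq)
    exact Nat.card_le_card_of_injective _ this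
  have h2 : Nat.card {v : G.V // v ≠ r} = Nat.card G.V - 1 := by
    have e1 : Nat.card {v : G.V // v ≠ r} = ({r}ᶜ : Set G.V).ncard := by
      rw [← Nat.card_coe_set_eq]
      rfl
    rw [e1, Set.compl_eq_univ_diff,
      Set.ncard_diff (Set.subset_univ _) (Set.toFinite _), Set.ncard_univ, Set.ncard_singleton]
  have h3 : 1 ≤ Nat.card G.V := by
    have : Nonempty G.V := ⟨r⟩
    rw [Nat.card_eq_fintype_card]
    exact Fintype.card_pos
  omega

/-- Deleting one edge drops the edge count by one. -/
lemma card_E_deleteEdges_singleton (x : G.E) :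
    Nat.card (G.deleteEdges ({x} : Set G.E)).E = Nat.card G.E - 1 := by
  have e1 : Nat.card (G.deleteEdges ({x} : Set G.E)).E = ({x}ᶜ : Set G.E).ncard := by
    rw [← Nat.card_coe_set_eq]
    rfl
  rw [e1, Set.compl_eq_univ_diff,
    Set.ncard_diff (Set.subset_univ _) (Set.toFinite _), Set.ncard_univ, Set.ncard_singleton]

end Multigraph
namespace Multigraph

variable {G : Multigraph}

/-- The set of edges lying in exactly the same cycle sets as `a`. -/
def classOf (G : Multigraph) (a : G.E) : Set G.E :=
  {f | ∀ T : Set G.E, G.IsCycleSet T → (a ∈ T ↔ f ∈ T)}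

lemma mem_classOf_self (a : G.E) : a ∈ G.classOf a := fun _ _ => Iff.rfl

lemma classOf_eq_of_mem {a f : G.E} (h : f ∈ G.classOf a) : G.classOf f = G.classOf a := by
  ext g
  constructor
  · intro hg T hT
    exact (h T hT).trans (hg T hT)
  · intro hg T hT
    exact ((h T hT).symm).trans (hg T hT)

lemma classOf_subset {S : Set G.E} {a : G.E} (hS : G.IsCycleSet S) (ha : a ∈ S) :
    G.classOf a ⊆ S := fun _ hf => (hf S hS).1 ha

/-- Strong circuit exchange: if `f` is non-separating and not equivalent to `a`,
there is a cycle set through `f` avoiding `a`. -/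
lemma key_exchange {a f : G.E} (hf : ¬ G.IsSeparating f) (hfc : f ∉ G.classOf a) :
    ∃ T, G.IsCycleSet T ∧ f ∈ T ∧ a ∉ T := by
  have hfa : a ≠ f := by
    rintro rfl
    exact hfc (mem_classOf_self a)
  rw [classOf, Set.mem_setOf_eq] at hfc
  push_neg at hfc
  obtain ⟨T₀, hT₀, hiff⟩ := hfc
  rcases hiff with ⟨haT₀, hfT₀⟩ | ⟨haT₀, hfT₀⟩
  · obtain ⟨T₁, hT₁, hfT₁, hT₁sub⟩ := exists_cycleSet (A := {f}ᶜ)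
      (by simp) (not_isSeparating_iff.mp hf)
    by_cases haT₁ : a ∈ T₁
    · have w₁ := hT₁.reachIn_of_mem hfT₁
      have w₀ := hT₀.reachIn_of_mem haT₀
      have h2 := w₁.replace (e := a) w₀
      have hfA₂ : f ∉ ((T₁ \ {f}) \ {a}) ∪ (T₀ \ {a}) := by
        rintro (⟨⟨-, hc⟩, -⟩ | ⟨hc, -⟩)
        · exact hc rfl
        · exact hfT₀ hc
      obtain ⟨T₂, hT₂, hfT₂, hT₂sub⟩ := exists_cycleSet hfA₂ h2
      refine ⟨T₂, hT₂, hfT₂, fun haT₂ => ?_⟩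
      rcases Set.mem_insert_iff.mp (hT₂sub haT₂) with hc | hc
      · exact hfa hc
      · rcases hc with ⟨-, hc⟩ | ⟨-, hc⟩ <;> exact hc rfl
    · exact ⟨T₁, hT₁, hfT₁, haT₁⟩
  · exact ⟨T₀, hT₀, hfT₀, haT₀⟩

/-- Two distinct edges of a class form a 2-edge-cut. -/
lemma two_cut {a g g' : G.E} (hg : g ∈ G.classOf a) (hg' : g' ∈ G.classOf a)
    (hne : g ≠ g') : ¬ G.ReachIn ({g, g'}ᶜ) (G.fst g) (G.snd g) := by
  intro hr
  obtain ⟨T, hT, hgT, hTsub⟩ := exists_cycleSet (A := ({g, g'} : Set G.E)ᶜ)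
    (by simp) hr
  have haT : a ∈ T := (hg T hT).2 hgT
  have hg'T : g' ∈ T := (hg' T hT).1 haT
  rcases Set.mem_insert_iff.mp (hTsub hg'T) with hc | hc
  · exact hne hc.symm
  · exact hc (Or.inr rfl)

end Multigraph
namespace Multigraph

variable {G : Multigraph}

/-- The core of the contraction `Γ∖X (Y)`. -/
def ctr (G : Multigraph) (X Y : Set G.E) : Multigraph :=
  ((G.deleteEdges X).contractCompl {e | e.1 ∈ Y}).core

/-- The edge of `G.ctr X Y` corresponding to `g ∈ Y`. -/
def ctrEdge (G : Multigraph) (X Y : Set G.E) (g : G.E) (hgX : g ∉ X) (hgY : g ∈ Y) :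
    (G.ctr X Y).E :=
  ⟨⟨⟨g, hgX⟩, hgY⟩, Set.mem_univ _⟩

lemma adj_dd_iff {X Y : Set G.E} {u v : G.V} :
    ((G.deleteEdges X).deleteEdges {e | e.1 ∈ Y}).Adj u v ↔ G.Radj (Xᶜ ∩ Yᶜ) u v := by
  constructor
  · rintro ⟨⟨⟨g, hgX⟩, hgY⟩, hj⟩; exact ⟨g, ⟨hgX, hgY⟩, hj⟩
  · rintro ⟨g, ⟨hgX, hgY⟩, hj⟩; exact ⟨⟨⟨g, hgX⟩, hgY⟩, hj⟩

lemma quot_eq_iff {X Y : Set G.E} {u v : G.V} :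
    Quot.mk ((G.deleteEdges X).deleteEdges {e | e.1 ∈ Y}).Adj u =
      Quot.mk ((G.deleteEdges X).deleteEdges {e | e.1 ∈ Y}).Adj v ↔
    G.ReachIn (Xᶜ ∩ Yᶜ) u v := by
  constructor
  · intro h
    have h2 : Relation.EqvGen ((G.deleteEdges X).deleteEdges {e | e.1 ∈ Y}).Adj u v :=
      Quot.eqvGen_exact h
    clear h
    induction h2 with
    | rel x y hxy => exact Radj.reachIn (adj_dd_iff.mp hxy)
    | refl x => exact ReachIn.refl
    | symm x y _ ih => exact ih.symm
    | trans x y z _ _ ih1 ih2 => exact ih1.trans ih2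
  · intro h
    induction h with
    | refl => rfl
    | tail _ hstep ih => exact ih.trans (Quot.sound (adj_dd_iff.mpr hstep))

/-- Lift a walk of `G` using collapsed edges (in `Xᶜ ∩ Yᶜ`) and contraction
edges in `W` to a walk in the contraction minus `Z`. -/
lemma reach_ctr {X Y : Set G.E} (Z : Set (G.ctr X Y).E) {W : Set G.E}
    (hWY : W ⊆ Y) (hWX : ∀ g ∈ W, g ∉ X)
    (hWZ : ∀ g (hgX : g ∉ X) (hgY : g ∈ Y), g ∈ W → ctrEdge G X Y g hgX hgY ∉ Z) :
    ∀ {u v : G.V}, G.ReachIn ((Xᶜ ∩ Yᶜ) ∪ W) u v →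
    ∀ (x y : (G.ctr X Y).V),
      x.1 = Quot.mk ((G.deleteEdges X).deleteEdges {e | e.1 ∈ Y}).Adj u →
      y.1 = Quot.mk ((G.deleteEdges X).deleteEdges {e | e.1 ∈ Y}).Adj v →
      ((G.ctr X Y).deleteEdges Z).Reachable x y := by
  intro u v h
  induction h using Relation.ReflTransGen.head_induction_on with
  | refl =>
      intro x y hx hy
      have : x = y := Subtype.ext (hx.trans hy.symm)
      rw [this]
      exact Relation.ReflTransGen.refl
  | @head u c hstep _ ih =>
      intro x y hx hy
      obtain ⟨g, hgm, hj⟩ := hstep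
      rcases hgm with ⟨hgX, hgY⟩ | hgW
      · -- collapsed edge: classes are equal
        have hq : Quot.mk ((G.deleteEdges X).deleteEdges {e | e.1 ∈ Y}).Adj u =
            Quot.mk ((G.deleteEdges X).deleteEdges {e | e.1 ∈ Y}).Adj c :=
          quot_eq_iff.mpr (Radj.reachIn ⟨g, ⟨hgX, hgY⟩, hj⟩)
        exact ih x y (hx.trans hq) hy
      · -- contraction edge
        have hgX := hWX g hgW
        have hgY := hWY hgW
        set ee := ctrEdge G X Y g hgX hgY with hee
        have heeZ : ee ∉ Z := hWZ g hgX hgY hgW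
        -- the two endpoints of ee as vertices of the core
        set xf : (G.ctr X Y).V := (G.ctr X Y).fst ee with hxf
        set xs : (G.ctr X Y).V := (G.ctr X Y).snd ee with hxs
        have hxfv : xf.1 = Quot.mk ((G.deleteEdges X).deleteEdges {e | e.1 ∈ Y}).Adj (G.fst g) :=
          rfl
        have hxsv : xs.1 = Quot.mk ((G.deleteEdges X).deleteEdges {e | e.1 ∈ Y}).Adj (G.snd g) :=
          rfl
        have hadj : ∀ p q : (G.ctr X Y).V,
            ((p = xf ∧ q = xs) ∨ (p = xs ∧ q = xf)) →
            ((G.ctr X Y).deleteEdges Z).Adj p q := by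
          rintro p q (⟨rfl, rfl⟩ | ⟨rfl, rfl⟩)
          · exact ⟨⟨ee, heeZ⟩, Or.inl ⟨rfl, rfl⟩⟩
          · exact ⟨⟨ee, heeZ⟩, Or.inr ⟨rfl, rfl⟩⟩
        rcases hj with ⟨h1, h2⟩ | ⟨h1, h2⟩
        · -- fst g = u, snd g = c
          have hx' : x = xf := Subtype.ext (by rw [hx, hxfv, h1])
          refine Relation.ReflTransGen.head (hadj x xs (Or.inl ⟨hx', rfl⟩)) ?_
          exact ih xs y (by rw [hxsv, h2]) hy
        · -- fst g = c, snd g = u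
          have hx' : x = xs := Subtype.ext (by rw [hx, hxsv, h2])
          refine Relation.ReflTransGen.head (hadj x xf (Or.inr ⟨hx', rfl⟩)) ?_
          exact ih xf y (by rw [hxfv, h1]) hy

/-- Project a walk in the contraction minus `Z` down to `G`. -/
lemma ctr_reach_down {X Y : Set G.E} (Z : Set (G.ctr X Y).E) {x y : (G.ctr X Y).V}
    (h : ((G.ctr X Y).deleteEdges Z).Reachable x y) :
    ∀ a b : G.V,
      Quot.mk ((G.deleteEdges X).deleteEdges {e | e.1 ∈ Y}).Adj a = x.1 →
      Quot.mk ((G.deleteEdges X).deleteEdges {e | e.1 ∈ Y}).Adj b = y.1 →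
      G.ReachIn ((Xᶜ ∩ Yᶜ) ∪
        {g | ∃ (h1 : g ∉ X) (h2 : g ∈ Y), ctrEdge G X Y g h1 h2 ∉ Z}) a b := by
  induction h using Relation.ReflTransGen.head_induction_on with
  | refl =>
      intro a b hax hby
      have : Quot.mk ((G.deleteEdges X).deleteEdges {e | e.1 ∈ Y}).Adj a =
          Quot.mk ((G.deleteEdges X).deleteEdges {e | e.1 ∈ Y}).Adj b := by
        rw [hax, hby]
      exact (quot_eq_iff.mp this).mono Set.subset_union_left
  | @head p z hstep _ ih =>
      intro a b hax hby
      obtain ⟨⟨⟨⟨⟨g, hgX⟩, hgY⟩, hgu⟩, hZ⟩, hj⟩ := hstep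
      have hZ' : ctrEdge G X Y g hgX hgY ∉ Z := by
        have : ctrEdge G X Y g hgX hgY = ⟨⟨⟨g, hgX⟩, hgY⟩, hgu⟩ := Subtype.ext rfl
        rw [this]; exact hZ
      have hgmem : g ∈ {g | ∃ (h1 : g ∉ X) (h2 : g ∈ Y), ctrEdge G X Y g h1 h2 ∉ Z} :=
        ⟨hgX, hgY, hZ'⟩
      rcases hj with ⟨h1, h2⟩ | ⟨h1, h2⟩
      · -- fst of edge = p, snd = z
        have hp : Quot.mk ((G.deleteEdges X).deleteEdges {e | e.1 ∈ Y}).Adj (G.fst g) = p.1 :=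
          congrArg Subtype.val h1
        have hz : Quot.mk ((G.deleteEdges X).deleteEdges {e | e.1 ∈ Y}).Adj (G.snd g) = z.1 :=
          congrArg Subtype.val h2
        have hstep1 : G.ReachIn ((Xᶜ ∩ Yᶜ) ∪
            {g | ∃ (h1 : g ∉ X) (h2 : g ∈ Y), ctrEdge G X Y g h1 h2 ∉ Z}) a (G.fst g) :=
          (quot_eq_iff.mp (hax.trans hp.symm)).mono Set.subset_union_left
        refine (hstep1.trans (Radj.reachIn ⟨g, Or.inr hgmem, Or.inl ⟨rfl, rfl⟩⟩)).trans ?_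
        exact ih (G.snd g) b hz hby
      · have hp : Quot.mk ((G.deleteEdges X).deleteEdges {e | e.1 ∈ Y}).Adj (G.snd g) = p.1 :=
          congrArg Subtype.val h2
        have hz : Quot.mk ((G.deleteEdges X).deleteEdges {e | e.1 ∈ Y}).Adj (G.fst g) = z.1 :=
          congrArg Subtype.val h1
        have hstep1 : G.ReachIn ((Xᶜ ∩ Yᶜ) ∪
            {g | ∃ (h1 : g ∉ X) (h2 : g ∈ Y), ctrEdge G X Y g h1 h2 ∉ Z}) a (G.snd g) :=
          (quot_eq_iff.mp (hax.trans hp.symm)).mono Set.subset_union_left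
        refine (hstep1.trans (Radj.reachIn ⟨g, Or.inr hgmem, Or.inr ⟨rfl, rfl⟩⟩)).trans ?_
        exact ih (G.fst g) b hz hby

end Multigraph
namespace Multigraph

variable {G : Multigraph}

lemma reachable_of_deleteEdges_empty {H : Multigraph} {u v : H.V}
    (h : (H.deleteEdges (∅ : Set H.E)).Reachable u v) : H.Reachable u v := by
  refine Relation.ReflTransGen.mono (fun x y hxy => ?_) _ _ h
  obtain ⟨⟨e, he⟩, hj⟩ := hxy
  exact ⟨e, hj⟩

lemma reach_deleteEdges_deleteEdges {H : Multigraph} (Y1 : Set H.E)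
    (Y2 : Set (H.deleteEdges Y1).E) {u v : H.V}
    (h : ((H.deleteEdges Y1).deleteEdges Y2).Reachable u v) :
    (H.deleteEdges (Y1 ∪ (Subtype.val '' Y2))).Reachable u v := by
  refine Relation.ReflTransGen.mono (fun x y hxy => ?_) _ _ h
  obtain ⟨⟨⟨e, he1⟩, he2⟩, hj⟩ := hxy
  refine ⟨⟨e, ?_⟩, hj⟩
  rintro (hc | hc)
  · exact he1 hc
  · obtain ⟨w, hw, hweq⟩ := hc
    exact he2 (by rwa [show w = ⟨e, he1⟩ from Subtype.ext hweq] at hw)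

theorem isC1_classOf {S : Set G.E} (hS : G.IsCycleSet S) {a : G.E} (ha : a ∈ S) :
    G.IsC1 (G.classOf a) := by
  have hCS : G.classOf a ⊆ S := classOf_subset hS ha
  have haC : a ∈ G.classOf a := mem_classOf_self a
  have hnonsep : ∀ g ∈ S, ¬ G.IsSeparating g := fun g hg => hS.not_isSeparating hg
  have hnsepX : ∀ g ∈ G.classOf a, g ∉ G.sepEdges := fun g hg => hnonsep g (hCS hg)
  have hmonoS : S ⊆ ((G.sepEdgesᶜ ∩ (G.classOf a)ᶜ) ∪ G.classOf a) := by
    intro g hg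
    by_cases hgC : g ∈ G.classOf a
    · exact Or.inr hgC
    · exact Or.inl ⟨hnonsep g hg, hgC⟩
  -- the canonical description of vertices of the contraction core
  have hvert : ∀ x : (G.ctr G.sepEdges (G.classOf a)).V, ∃ g, ∃ hg : g ∈ G.classOf a,
      x.1 = Quot.mk ((G.deleteEdges G.sepEdges).deleteEdges
          {e | e.1 ∈ G.classOf a}).Adj (G.fst g) ∨
      x.1 = Quot.mk ((G.deleteEdges G.sepEdges).deleteEdges
          {e | e.1 ∈ G.classOf a}).Adj (G.snd g) := by
    rintro ⟨q, e, -, he⟩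
    exact ⟨e.1.1, e.2, by rcases he with h | h <;> [exact Or.inl h.symm; exact Or.inr h.symm]⟩
  -- connectivity of the contraction core
  have hKconn : (G.ctr G.sepEdges (G.classOf a)).Connected := by
    constructor
    · exact ⟨(G.ctr G.sepEdges (G.classOf a)).fst (ctrEdge G _ _ a (hnsepX a haC) haC)⟩
    · intro x y
      obtain ⟨g, hg, hgx⟩ := hvert x
      obtain ⟨g', hg', hgy⟩ := hvert y
      have hu : ∀ u₀ v₀ : G.V, G.Incid S u₀ → G.Incid S v₀ →
          x.1 = Quot.mk ((G.deleteEdges G.sepEdges).deleteEdges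
            {e | e.1 ∈ G.classOf a}).Adj u₀ →
          y.1 = Quot.mk ((G.deleteEdges G.sepEdges).deleteEdges
            {e | e.1 ∈ G.classOf a}).Adj v₀ →
          (G.ctr G.sepEdges (G.classOf a)).Reachable x y := by
        intro u₀ v₀ hu₀ hv₀ hx hy
        have hreach := (hS.reachIn_of_incid hu₀ hv₀).mono hmonoS
        refine reachable_of_deleteEdges_empty
          (reach_ctr (∅ : Set (G.ctr G.sepEdges (G.classOf a)).E)
            (le_refl (G.classOf a)) hnsepX (fun g hgX hgY hgW => Set.notMem_empty _)
            hreach x y hx hy)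
      have hincg : G.Incid S (G.fst g) ∧ G.Incid S (G.snd g) :=
        ⟨⟨g, hCS hg, Or.inl rfl⟩, ⟨g, hCS hg, Or.inr rfl⟩⟩
      have hincg' : G.Incid S (G.fst g') ∧ G.Incid S (G.snd g') :=
        ⟨⟨g', hCS hg', Or.inl rfl⟩, ⟨g', hCS hg', Or.inr rfl⟩⟩
      rcases hgx with hgx | hgx <;> rcases hgy with hgy | hgy
      · exact hu _ _ hincg.1 hincg'.1 hgx hgy
      · exact hu _ _ hincg.1 hincg'.2 hgx hgy
      · exact hu _ _ hincg.2 hincg'.1 hgx hgy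
      · exact hu _ _ hincg.2 hincg'.2 hgx hgy
  -- no separating edges in the contraction core
  have hKsep : (G.ctr G.sepEdges (G.classOf a)).sepEdges = ∅ := by
    rw [Set.eq_empty_iff_forall_notMem]
    intro x hx
    have hx' : (G.ctr G.sepEdges (G.classOf a)).IsSeparating x := hx
    apply hx'
    have hg₀ : x.1.1.1 ∈ G.classOf a := x.1.2
    have hreach := (hS.reachIn_of_mem (hCS hg₀)).mono
      (show S \ {x.1.1.1} ⊆ ((G.sepEdgesᶜ ∩ (G.classOf a)ᶜ) ∪ (G.classOf a \ {x.1.1.1})) by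
        rintro g ⟨hgS, hgne⟩
        by_cases hgC : g ∈ G.classOf a
        · exact Or.inr ⟨hgC, hgne⟩
        · exact Or.inl ⟨hnonsep g hgS, hgC⟩)
    refine reach_ctr ({x} : Set (G.ctr G.sepEdges (G.classOf a)).E)
      (fun g hg => hg.1) (fun g hg => hnsepX g hg.1) ?_ hreach _ _ rfl rfl
    intro g hgX hgY hgW hmem
    apply hgW.2
    have := congrArg (fun t => t.1.1.1) hmem
    exact this
  have hKnosep : ∀ x : (G.ctr G.sepEdges (G.classOf a)).E,
      ¬ (G.ctr G.sepEdges (G.classOf a)).IsSeparating x := by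
    intro x hx
    rw [Set.eq_empty_iff_forall_notMem] at hKsep
    exact hKsep x hx
  refine ⟨fun e he => hnonsep e (hCS he), ⟨hKconn, hKsep, ?_⟩, ?_⟩
  · -- b1 = 1
    set x₀ : (G.ctr G.sepEdges (G.classOf a)).E := ctrEdge G _ _ a (hnsepX a haC) haC with hx₀
    have hdconn := connected_deleteEdges_of_not_separating hKconn (hKnosep x₀)
    -- every edge of K minus x₀ is separating
    have hall : ∀ y : ((G.ctr G.sepEdges (G.classOf a)).deleteEdges {x₀}).E,
        ((G.ctr G.sepEdges (G.classOf a)).deleteEdges {x₀}).IsSeparating y := by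
      intro y
      by_contra hns
      have hg₁C : y.1.1.2 = y.1.1.2 := rfl
      -- underlying edge of y
      have hyC : y.1.1.1.1 ∈ G.classOf a := y.1.1.2
      have hyne : y.1.1.1.1 ≠ a := by
        intro hga
        exact y.2 (Set.mem_singleton_iff.mpr (Subtype.ext (Subtype.ext (Subtype.ext hga))))
      have hre : (((G.ctr G.sepEdges (G.classOf a)).deleteEdges {x₀}).deleteEdges {y}).Reachable
          (((G.ctr G.sepEdges (G.classOf a)).deleteEdges {x₀}).fst y)
          (((G.ctr G.sepEdges (G.classOf a)).deleteEdges {x₀}).snd y) := not_not.mp hns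
      have hre2 := reach_deleteEdges_deleteEdges {x₀} {y} hre
      have hdown := ctr_reach_down ({x₀} ∪ (Subtype.val '' {y})) hre2
        (G.fst y.1.1.1.1) (G.snd y.1.1.1.1) rfl rfl
      have hsub : ((G.sepEdgesᶜ ∩ (G.classOf a)ᶜ) ∪
          {g | ∃ (h1 : g ∉ G.sepEdges) (h2 : g ∈ G.classOf a),
            ctrEdge G G.sepEdges (G.classOf a) g h1 h2 ∉ ({x₀} ∪ (Subtype.val '' {y}))}) ⊆
          ({y.1.1.1.1, a} : Set G.E)ᶜ := by
        rintro g (⟨hgsep, hgC⟩ | ⟨h1', h2', hgZ⟩) <;> intro hmem <;>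
          rcases Set.mem_insert_iff.mp hmem with hg | hg
        · exact hgC (hg ▸ hyC)
        · exact hgC ((Set.mem_singleton_iff.mp hg) ▸ haC)
        · subst hg
          exact hgZ (Or.inr ⟨y, rfl, Subtype.ext (Subtype.ext (Subtype.ext rfl))⟩)
        · rw [Set.mem_singleton_iff] at hg
          subst hg
          exact hgZ (Or.inl (Set.mem_singleton_iff.mpr
            (Subtype.ext (Subtype.ext (Subtype.ext rfl)))))
      exact two_cut hyC haC hyne (hdown.mono hsub)
    have h1 := card_V_le_card_E_add_one hdconn
    have h2 := card_E_add_one_le_card_V hdconn hall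
    have h3 := card_E_deleteEdges_singleton (G := G.ctr G.sepEdges (G.classOf a)) x₀
    have h4 : Nat.card ((G.ctr G.sepEdges (G.classOf a)).deleteEdges {x₀}).V
        = Nat.card (G.ctr G.sepEdges (G.classOf a)).V := rfl
    have h5 : 1 ≤ Nat.card (G.ctr G.sepEdges (G.classOf a)).E := by
      have : Nonempty (G.ctr G.sepEdges (G.classOf a)).E := ⟨x₀⟩
      rw [Nat.card_eq_fintype_card]
      exact Fintype.card_pos
    have hnum := numComponents_eq_one hKconn
    show (G.ctr G.sepEdges (G.classOf a)).b1 = 1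
    rw [b1, hnum]
    have hEq : Nat.card (G.ctr G.sepEdges (G.classOf a)).E
        = Nat.card (G.ctr G.sepEdges (G.classOf a)).V := by omega
    rw [hEq]
    ring
  · -- part (iii)
    rw [Set.eq_empty_iff_forall_notMem]
    intro x hx
    have hx' : ((G.deleteEdges G.sepEdges).deleteEdges
        {e | e.1 ∈ G.classOf a}).IsSeparating x := hx
    apply hx'
    have hfX : x.1.1 ∉ G.sepEdges := x.1.2
    have hfC : x.1.1 ∉ G.classOf a := x.2
    obtain ⟨T, hT, hfT, haT⟩ := key_exchange (G := G) (a := a) hfX hfC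
    have hTC : ∀ g ∈ T, g ∉ G.classOf a := fun g hgT hgC => haT ((hgC T hT).mpr hgT)
    have hr := hT.reachIn_of_mem hfT
    refine deleteEdges_reachable_iff.mpr (reachIn_deleteEdges_iff.mpr (reachIn_deleteEdges_iff.mpr ?_))
    refine hr.mono ?_
    rintro g ⟨hgT, hgne⟩
    refine ⟨hT.not_isSeparating hgT, ⟨hTC g hgT, ?_⟩⟩
    intro hmem
    replace hmem := Set.mem_singleton_iff.mp hmem
    have hgx : g = x.1.1 := congrArg
      (fun t : ((G.deleteEdges G.sepEdges).deleteEdges {e | e.1 ∈ G.classOf a}).E => t.1.1) hmem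
    exact hgne (Set.mem_singleton_iff.mpr hgx)

end Multigraph

/-- The edge set of a cycle subgraph is a disjoint union of
C1-sets of `Γ`. -/
theorem isCycleSet_eq_sUnion_isC1 (G : Multigraph) (S : Set G.E) (h : G.IsCycleSet S) :
    ∃ 𝒮 : Set (Set G.E), (∀ T ∈ 𝒮, G.IsC1 T) ∧ 𝒮.PairwiseDisjoint id ∧ ⋃₀ 𝒮 = S := by
  refine ⟨{T | ∃ a ∈ S, T = G.classOf a}, ?_, ?_, ?_⟩
  · rintro T ⟨a, haS, rfl⟩
    exact Multigraph.isC1_classOf h haS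
  · rintro T ⟨a, haS, rfl⟩ T' ⟨b, hbS, rfl⟩ hne
    rw [Function.onFun, id, id]
    rw [Set.disjoint_left]
    intro g hga hgb
    exact hne ((Multigraph.classOf_eq_of_mem hga).symm.trans (Multigraph.classOf_eq_of_mem hgb))
  · ext g
    simp only [Set.mem_sUnion, Set.mem_setOf_eq]
    constructor
    · rintro ⟨T, ⟨a, haS, rfl⟩, hgT⟩
      exact Multigraph.classOf_subset h haS hgT
    · intro hg
      exact ⟨G.classOf g, ⟨g, hg, rfl⟩, Multigraph.mem_classOf_self g⟩
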